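/- The 13 Yu–Oh projectors statistically distinguish any two distinct real rays of the qutrit: for any two one-dimensional subspaces L ≠ L' of EuclideanSpace ℂ (Fin 3), each spanned by a vector with real entries, there exist i : Fin 13 and unit vectors w ∈ L, w' ∈ L' such that the Born probabilities differ, ‖Pᵢ w‖ ≠ ‖Pᵢ w'‖. -/

import Mathlib

/-!
For vectors with real entries the inner product `⟪vᵢ, w⟫` is real, so equal Born probabilities
`‖Pᵢ w‖ = |⟪vᵢ, w⟫| / ‖vᵢ‖` give equal squares `⟪vᵢ, w⟫ ^ 2`. For the vectors `e_k` and
`e_j ± e_k` these squares determine, by polarization, all products `w_j w_k`, that is the rank-one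
matrix `w wᵀ`; this determines `w` up to sign, hence the ray it spans.
-/

open scoped InnerProductSpace

noncomputable def v : Fin 13 → EuclideanSpace ℂ (Fin 3) :=
  ![!₂[1, 0, 0], !₂[0, 1, 0], !₂[0, 0, 1],
    !₂[0, 1, -1], !₂[0, 1, 1], !₂[1, 0, -1], !₂[1, 0, 1], !₂[1, -1, 0], !₂[1, 1, 0],
    !₂[1, 1, 1], !₂[-1, 1, 1], !₂[1, -1, 1], !₂[1, 1, -1]]

noncomputable def P (i : Fin 13) (w : EuclideanSpace ℂ (Fin 3)) : EuclideanSpace ℂ (Fin 3) :=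
  (Submodule.orthogonalProjectionOnto (Submodule.span ℂ {v i}) w : EuclideanSpace ℂ (Fin 3))

open ComplexConjugate

theorem norm_starProjection_span_singleton_mul_norm {𝕜 E : Type*} [RCLike 𝕜]
    [NormedAddCommGroup E] [InnerProductSpace 𝕜 E] (u w : E) :
    ‖(𝕜 ∙ u).starProjection w‖ * ‖u‖ = ‖⟪u, w⟫_𝕜‖ := by
  rcases eq_or_ne u 0 with rfl | hu
  · simp
  rw [Submodule.starProjection_singleton, norm_smul, norm_div, RCLike.norm_ofReal, abs_sq]
  field_simp

theorem eq_or_eq_neg_of_mul_eq_mul {R ι : Type*} [CommRing R] [IsDomain R] {x y : ι → R}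
    (h : ∀ i j, x i * x j = y i * y j) : y = x ∨ y = -x := by
  rcases eq_or_ne x 0 with rfl | hx
  · left
    funext i
    simpa using (h i i).symm
  obtain ⟨k, hk⟩ := Function.ne_iff.mp hx
  rcases mul_self_eq_mul_self_iff.mp (h k k).symm with hyk | hyk
  · left
    funext j
    exact mul_left_cancel₀ hk (by linear_combination -h k j - y j * hyk)
  · right
    funext j
    exact mul_left_cancel₀ hk (by simp only [Pi.neg_apply]; linear_combination h k j + y j * hyk)

theorem Complex.sq_eq_sq_of_norm_eq_of_conj_eq {z z' : ℂ} (hz : conj z = z) (hz' : conj z' = z')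
    (h : ‖z‖ = ‖z'‖) : z ^ 2 = z' ^ 2 := by
  rw [sq, sq, ← congrArg (z * ·) hz, ← congrArg (z' * ·) hz']
  simp only [RCLike.mul_conj, h]

section IsRealVector

variable {ι : Type*}

def IsRealVector (x : EuclideanSpace ℂ ι) : Prop :=
  ∀ k, conj (x k) = x k

theorem IsRealVector.ofReal_smul {x : EuclideanSpace ℂ ι} (hx : IsRealVector x) (r : ℝ) :
    IsRealVector ((r : ℂ) • x) := by
  intro k
  simp [hx k]

variable [Fintype ι]

theorem IsRealVector.conj_inner {x y : EuclideanSpace ℂ ι} (hx : IsRealVector x)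
    (hy : IsRealVector y) : conj ⟪x, y⟫_ℂ = ⟪x, y⟫_ℂ := by
  simp [PiLp.inner_apply, hx _, hy _]

theorem IsRealVector.exists_norm_eq_one_span_eq {x : EuclideanSpace ℂ ι} (hx : IsRealVector x)
    (hx0 : x ≠ 0) :
    ∃ w, IsRealVector w ∧ ‖w‖ = 1 ∧ Submodule.span ℂ {w} = Submodule.span ℂ {x} :=
  ⟨((‖x‖⁻¹ : ℝ) : ℂ) • x, hx.ofReal_smul _, by simpa using norm_smul_inv_norm (𝕜 := ℂ) hx0,
    Submodule.span_singleton_smul_eq (by simpa using hx0) x⟩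

end IsRealVector

theorem isRealVector_v (i : Fin 13) : IsRealVector (v i) := by
  intro k
  fin_cases i <;> fin_cases k <;> simp [v]

theorem norm_P_mul_norm_v (i : Fin 13) (w : EuclideanSpace ℂ (Fin 3)) :
    ‖P i w‖ * ‖v i‖ = ‖⟪v i, w⟫_ℂ‖ := by
  rw [P, ← Submodule.starProjection_apply]
  exact norm_starProjection_span_singleton_mul_norm (v i) w

theorem mul_eq_mul_of_sq_inner_v_eq {x y : EuclideanSpace ℂ (Fin 3)}
    (h : ∀ i, ⟪v i, x⟫_ℂ ^ 2 = ⟪v i, y⟫_ℂ ^ 2) (j k : Fin 3) : x j * x k = y j * y k := by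
  have h0 := h 0; have h1 := h 1; have h2 := h 2; have h3 := h 3; have h4 := h 4
  have h5 := h 5; have h6 := h 6; have h7 := h 7; have h8 := h 8
  simp [v, PiLp.inner_apply, Fin.sum_univ_three] at h0 h1 h2 h3 h4 h5 h6 h7 h8
  -- `4 x_j x_k = (x_j + x_k) ^ 2 - (x_j - x_k) ^ 2`
  fin_cases j <;> fin_cases k <;> grind

theorem span_eq_of_norm_P_eq {x y : EuclideanSpace ℂ (Fin 3)} (hx : IsRealVector x)
    (hy : IsRealVector y) (h : ∀ i, ‖P i x‖ = ‖P i y‖) :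
    Submodule.span ℂ {x} = Submodule.span ℂ {y} := by
  have hsq (i : Fin 13) : ⟪v i, x⟫_ℂ ^ 2 = ⟪v i, y⟫_ℂ ^ 2 :=
    Complex.sq_eq_sq_of_norm_eq_of_conj_eq ((isRealVector_v i).conj_inner hx)
      ((isRealVector_v i).conj_inner hy) (by rw [← norm_P_mul_norm_v, ← norm_P_mul_norm_v, h])
  rcases eq_or_eq_neg_of_mul_eq_mul (mul_eq_mul_of_sq_inner_v_eq hsq) with hyx | hyx
  · rw [WithLp.ofLp_injective 2 hyx]
  · rw [show y = -x from WithLp.ofLp_injective 2 (by rw [hyx, WithLp.ofLp_neg]),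
      ← Set.neg_singleton, Submodule.span_neg]

theorem yu_oh_distinguishes_real_rays
    (L L' : Submodule ℂ (EuclideanSpace ℂ (Fin 3)))
    (hL : ∃ w : EuclideanSpace ℂ (Fin 3), w ≠ 0 ∧
      (∀ k : Fin 3, (starRingEnd ℂ) (w k) = w k) ∧ L = Submodule.span ℂ {w})
    (hL' : ∃ w : EuclideanSpace ℂ (Fin 3), w ≠ 0 ∧
      (∀ k : Fin 3, (starRingEnd ℂ) (w k) = w k) ∧ L' = Submodule.span ℂ {w})
    (hne : L ≠ L') :
    ∃ (i : Fin 13) (w w' : EuclideanSpace ℂ (Fin 3)),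
      w ∈ L ∧ ‖w‖ = 1 ∧ w' ∈ L' ∧ ‖w'‖ = 1 ∧ ‖P i w‖ ≠ ‖P i w'‖ := by
  obtain ⟨u, hu0, hu, rfl⟩ := hL
  obtain ⟨u', hu'0, hu', rfl⟩ := hL'
  obtain ⟨w, hw, hw1, hwu⟩ := IsRealVector.exists_norm_eq_one_span_eq hu hu0
  obtain ⟨w', hw', hw'1, hw'u'⟩ := IsRealVector.exists_norm_eq_one_span_eq hu' hu'0
  by_contra! h
  refine hne ?_
  rw [← hwu, ← hw'u']
  exact span_eq_of_norm_P_eq hw hw' fun i => h i w w'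
    (hwu ▸ Submodule.mem_span_singleton_self w) hw1
    (hw'u' ▸ Submodule.mem_span_singleton_self w') hw'1
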